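/- (Eigenvalue attraction) Let M(t) be a smoothly varying real n×n matrix with a simple non-real eigenvalue λ(t) having right eigenvector v(t) (normalized) and left eigenvector u(t)* with u* v = 1. Then the force exerted by the complex conjugate eigenvalue λ̄ on λ in the second-derivative formula, namely 2·(u* Ṁ v̄̃)(ũ* Ṁ v)/(λ − λ̄) where ṽ = v̄ and ũ = ū are the eigenvectors of λ̄, equals −i·|uᵀ Ṁ v|²/Im(λ); hence it is directed toward the real axis (downward if Im λ > 0, upward if Im λ < 0), with magnitude inversely proportional to the distance 2|Im λ| between λ and λ̄. -/

import Mathlib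

open Matrix Complex ComplexConjugate

/-! Because `Ṁ` is real, `u* Ṁ v̄` is the complex conjugate of `z = uᵀ Ṁ v`, so the numerator of
the force is `2 |z|²`, while `λ - λ̄ = 2 i Im λ`. -/

theorem Matrix.star_dotProduct_mulVec {m n α : Type*} [Fintype m] [Fintype n] [CommSemiring α]
    [StarRing α] (u : m → α) (A : Matrix m n α) (v : n → α) :
    star (u ⬝ᵥ A *ᵥ v) = star u ⬝ᵥ A.map star *ᵥ star v := by
  simp only [dotProduct, mulVec, star_sum, Finset.mul_sum, star_mul', Pi.star_apply, map_apply]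

theorem Matrix.map_ofReal_map_star {m n : Type*} (A : Matrix m n ℝ) :
    (A.map ((↑) : ℝ → ℂ)).map star = A.map (↑) := by
  ext i j
  simp

theorem Complex.two_mul_conj_mul_self_div_sub_conj (z w : ℂ) (hw : w.im ≠ 0) :
    2 * (conj z * z) / (w - conj w) = -I * ((‖z‖ ^ 2 / w.im : ℝ) : ℂ) := by
  have hw' : (w.im : ℂ) ≠ 0 := ofReal_ne_zero.mpr hw
  rw [conj_mul', sub_conj, div_eq_iff (by simp [hw, I_ne_zero])]
  push_cast
  field_simp
  linear_combination (‖z‖ : ℂ) ^ 2 * I_sq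

theorem Complex.im_two_mul_conj_mul_self_div_sub_conj (z w : ℂ) (hw : w.im ≠ 0) :
    (2 * (conj z * z) / (w - conj w)).im = -(‖z‖ ^ 2 / w.im) := by
  rw [two_mul_conj_mul_self_div_sub_conj z w hw]
  simp only [neg_mul, neg_im, mul_im, I_re, I_im, ofReal_re, ofReal_im]
  ring

theorem eigenvalue_attraction_general {n : ℕ}
    (Mdot : Matrix (Fin n) (Fin n) ℝ)
    (lam : ℂ) (u v : Fin n → ℂ) (him : lam.im ≠ 0)
    (hne : u ⬝ᵥ (Mdot.map (fun x : ℝ => (x : ℂ))).mulVec v ≠ 0) :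
    2 * ((star u ⬝ᵥ (Mdot.map (fun x : ℝ => (x : ℂ))).mulVec (star v)) *
          (u ⬝ᵥ (Mdot.map (fun x : ℝ => (x : ℂ))).mulVec v)) /
        (lam - (starRingEnd ℂ) lam) =
      -Complex.I *
        (((‖u ⬝ᵥ (Mdot.map (fun x : ℝ => (x : ℂ))).mulVec v‖) ^ 2 / lam.im : ℝ) : ℂ) ∧
    (0 < lam.im →
      (2 * ((star u ⬝ᵥ (Mdot.map (fun x : ℝ => (x : ℂ))).mulVec (star v)) *
            (u ⬝ᵥ (Mdot.map (fun x : ℝ => (x : ℂ))).mulVec v)) /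
          (lam - (starRingEnd ℂ) lam)).im < 0) ∧
    (lam.im < 0 →
      0 < (2 * ((star u ⬝ᵥ (Mdot.map (fun x : ℝ => (x : ℂ))).mulVec (star v)) *
            (u ⬝ᵥ (Mdot.map (fun x : ℝ => (x : ℂ))).mulVec v)) /
          (lam - (starRingEnd ℂ) lam)).im) := by
  set z := u ⬝ᵥ (Mdot.map (fun x : ℝ => (x : ℂ))).mulVec v
  have hconj : star u ⬝ᵥ (Mdot.map (fun x : ℝ => (x : ℂ))).mulVec (star v) = conj z := by
    rw [← map_ofReal_map_star, ← star_dotProduct_mulVec]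
    rfl
  have hz : 0 < ‖z‖ ^ 2 := pow_pos (norm_pos_iff.mpr hne) 2
  rw [hconj, im_two_mul_conj_mul_self_div_sub_conj z lam him]
  exact ⟨two_mul_conj_mul_self_div_sub_conj z lam him,
    fun h => neg_neg_of_pos (div_pos hz h), fun h => neg_pos.mpr (div_neg_of_pos_of_neg hz h)⟩

/-- Eigenvalue attraction: Let `M(t)` be a smoothly varying real matrix with a
simple non-real eigenvalue `λ` at time `t`, with normalized right eigenvector `v` and left
eigenvector `u` satisfying `u* v = 1`. Then the force exerted by `conj λ` on `λ`, namely
`2·(u* Ṁ v̄)(uᵀ Ṁ v)/(λ − conj λ)` (the eigenvectors of `conj λ` being the entrywise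
conjugates `v̄, ū`), equals `−i·|uᵀ Ṁ v|²/Im(λ)`; it points toward the real axis. -/
theorem eigenvalue_attraction {n : ℕ} (M : ℝ → Matrix (Fin n) (Fin n) ℝ)
    (Mdot : Matrix (Fin n) (Fin n) ℝ) (t : ℝ)
    (hM : ∀ i j, HasDerivAt (fun s => M s i j) (Mdot i j) t)
    (lam : ℂ) (u v : Fin n → ℂ) (him : lam.im ≠ 0)
    (hnorm : ∑ a, ‖v a‖ ^ 2 = 1)
    (hright : ((M t).map (fun x : ℝ => (x : ℂ))).mulVec v = lam • v)
    (hleft : Matrix.vecMul (star u) ((M t).map (fun x : ℝ => (x : ℂ))) = lam • (star u))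
    (hduality : star u ⬝ᵥ v = 1)
    (hne : u ⬝ᵥ (Mdot.map (fun x : ℝ => (x : ℂ))).mulVec v ≠ 0) :
    2 * ((star u ⬝ᵥ (Mdot.map (fun x : ℝ => (x : ℂ))).mulVec (star v)) *
          (u ⬝ᵥ (Mdot.map (fun x : ℝ => (x : ℂ))).mulVec v)) /
        (lam - (starRingEnd ℂ) lam) =
      -Complex.I *
        (((‖u ⬝ᵥ (Mdot.map (fun x : ℝ => (x : ℂ))).mulVec v‖) ^ 2 / lam.im : ℝ) : ℂ) ∧
    (0 < lam.im →
      (2 * ((star u ⬝ᵥ (Mdot.map (fun x : ℝ => (x : ℂ))).mulVec (star v)) *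
            (u ⬝ᵥ (Mdot.map (fun x : ℝ => (x : ℂ))).mulVec v)) /
          (lam - (starRingEnd ℂ) lam)).im < 0) ∧
    (lam.im < 0 →
      0 < (2 * ((star u ⬝ᵥ (Mdot.map (fun x : ℝ => (x : ℂ))).mulVec (star v)) *
            (u ⬝ᵥ (Mdot.map (fun x : ℝ => (x : ℂ))).mulVec v)) /
          (lam - (starRingEnd ℂ) lam)).im) :=
  eigenvalue_attraction_general Mdot lam u v him hne
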